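/- For n ≥ 4, define functionals on ℝ^n by f_i(x) = x_i for 1 ≤ i ≤ n, f_{n+1}(x) = Σᵢ x_i, f_{n+2}(x) = (Σᵢ i·x_i)/n, and let ‖·‖ be the norm ‖x‖ = (Σ_{i=1}^{n+2} |f_i(x)|^{2p})^{1/(2p)} with p = ⌈(n+2)/2⌉, and let ‖·‖* be its dual norm. Then for every choice of indices 1 ≤ j < k < l ≤ n+2 and 1 ≤ i ≤ n+2 with i ∉ {j,k,l}, the dual-norm distance from f_i to span{f_j, f_k, f_l} is at least 1/(2n). -/

import Mathlib

open Finset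

/-- The system of `n+2` functionals on `ℝⁿ`: `fᵢ(x) = xᵢ` for `1 ≤ i ≤ n`,
`f_{n+1}(x) = ∑ xᵢ`, `f_{n+2}(x) = (∑ i·xᵢ)/n`. -/
noncomputable def cornerFunctional (n : ℕ) (i : Fin (n + 2)) (x : Fin n → ℝ) : ℝ :=
  if h : (i : ℕ) < n then x ⟨i, h⟩
  else if (i : ℕ) = n then ∑ s, x s
  else (∑ s : Fin n, (((s : ℕ) : ℝ) + 1) * x s) / n

/-- The norm `‖x‖ = (∑ᵢ |fᵢ(x)|^{2p})^{1/(2p)}` built from the above functionals,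
with `p = ⌈(n+2)/2⌉`. -/
noncomputable def cornerNorm (n : ℕ) (x : Fin n → ℝ) : ℝ :=
  (∑ i, |cornerFunctional n i x| ^ (2 * ((n + 3) / 2 : ℕ))) ^
    ((1 : ℝ) / (2 * ((n + 3) / 2 : ℕ)))

/-!
Since `dist(fᵢ, span{f_j, f_k, f_l}) ≥ |fᵢ(v)| / ‖v‖` for every `v` killed by `f_j, f_k, f_l`,
it suffices to find such a `v` with `|fₜ(v)| ≤ n` for all `t` and `|fᵢ(v)| ≥ 1`: then
`x = v / (2n)` has all `|fₜ(x)| ≤ 1/2`, so `‖x‖ ≤ ((n + 2) / 2^{2p})^{1/(2p)} ≤ 1`, while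
`|fᵢ(x)| ≥ 1/(2n)`. Such a `v` is an integer combination of at most three coordinate vectors
`e_r` with `r ∉ {j, k, l}` (and `r = i` when `fᵢ` is a coordinate), whose coefficients kill
whichever of `∑ xₛ` and `∑ (s + 1) xₛ` are among `f_j, f_k, f_l`; for instance
`(w_u - w_s) e_r + (w_r - w_u) e_s + (w_s - w_r) e_u` kills both, where `w_r = r + 1`.
-/

lemma one_le_abs_natCast_sub_natCast {a b : ℕ} (h : a ≠ b) : 1 ≤ |(a : ℝ) - b| := by
  have h' : (a : ℤ) - b ≠ 0 := sub_ne_zero.mpr (by exact_mod_cast h)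
  exact_mod_cast Int.one_le_abs h'

lemma abs_natCast_sub_natCast_le {a b m : ℕ} (ha : a ≤ m) (hb : b ≤ m) :
    |(a : ℝ) - b| ≤ m := by
  have ha' : (a : ℝ) ≤ m := by exact_mod_cast ha
  have hb' : (b : ℝ) ≤ m := by exact_mod_cast hb
  rw [abs_sub_le_iff]
  constructor <;> linarith [(a.cast_nonneg : (0 : ℝ) ≤ a), (b.cast_nonneg : (0 : ℝ) ≤ b)]

lemma abs_single_add_single_le {ι : Type*} [DecidableEq ι] {r s : ι} (hrs : r ≠ s)
    {a b B : ℝ} (ha : |a| ≤ B) (hb : |b| ≤ B) (t : ι) :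
    |(Pi.single r a + Pi.single s b : ι → ℝ) t| ≤ B := by
  rcases eq_or_ne t r with rfl | htr
  · simpa [hrs] using ha
  rcases eq_or_ne t s with rfl | hts
  · simpa [htr] using hb
  simpa [htr, hts] using (abs_nonneg a).trans ha

lemma abs_single_add_single_add_single_le {ι : Type*} [DecidableEq ι] {r s u : ι}
    (hrs : r ≠ s) (hru : r ≠ u) (hsu : s ≠ u) {a b c B : ℝ} (ha : |a| ≤ B) (hb : |b| ≤ B)
    (hc : |c| ≤ B) (t : ι) :
    |(Pi.single r a + Pi.single s b + Pi.single u c : ι → ℝ) t| ≤ B := by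
  rcases eq_or_ne t u with rfl | htu
  · simpa [hru, hsu] using hc
  simpa [htu] using abs_single_add_single_le hrs ha hb t

section

variable {n : ℕ}

lemma cornerFunctional_of_lt {t : Fin (n + 2)} (ht : (t : ℕ) < n) (x : Fin n → ℝ) :
    cornerFunctional n t x = x ⟨t, ht⟩ :=
  dif_pos ht

lemma cornerFunctional_of_eq {t : Fin (n + 2)} (ht : (t : ℕ) = n) (x : Fin n → ℝ) :
    cornerFunctional n t x = ∑ s, x s := by
  rw [cornerFunctional, dif_neg ht.not_lt, if_pos ht]

lemma cornerFunctional_of_eq_add_one {t : Fin (n + 2)} (ht : (t : ℕ) = n + 1)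
    (x : Fin n → ℝ) :
    cornerFunctional n t x = (∑ s : Fin n, ((s : ℕ) + 1 : ℝ) * x s) / n := by
  rw [cornerFunctional, dif_neg (by omega), if_neg (by omega)]

lemma cornerFunctional_smul (t : Fin (n + 2)) (c : ℝ) (x : Fin n → ℝ) :
    cornerFunctional n t (c • x) = c * cornerFunctional n t x := by
  unfold cornerFunctional
  split_ifs
  · rfl
  · simp [mul_sum]
  · simp only [Pi.smul_apply, smul_eq_mul, mul_left_comm _ c, ← mul_sum, mul_div_assoc]

lemma abs_cornerFunctional_le {x : Fin n → ℝ} {B : ℝ} (hn : 0 < n) (hx : ∀ s, |x s| ≤ B)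
    (hsum : |∑ s, x s| ≤ B) (hwsum : |∑ s : Fin n, ((s : ℕ) + 1 : ℝ) * x s| ≤ n * B)
    (t : Fin (n + 2)) : |cornerFunctional n t x| ≤ B := by
  obtain ht | ht | ht : (t : ℕ) < n ∨ (t : ℕ) = n ∨ (t : ℕ) = n + 1 := by omega
  · rw [cornerFunctional_of_lt ht]; exact hx _
  · rwa [cornerFunctional_of_eq ht]
  · rwa [cornerFunctional_of_eq_add_one ht, abs_div, Nat.abs_cast,
      div_le_iff₀ (by exact_mod_cast hn), mul_comm]

lemma cornerNorm_le_one_iff (x : Fin n → ℝ) :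
    cornerNorm n x ≤ 1 ↔ ∑ t, |cornerFunctional n t x| ^ (2 * ((n + 3) / 2)) ≤ 1 := by
  have hm : 0 < (n + 3) / 2 := by omega
  rw [cornerNorm, one_div, Real.rpow_inv_le_iff_of_pos (by positivity) zero_le_one
    (by positivity), Real.one_rpow]

lemma abs_cornerFunctional_le_one {x : Fin n → ℝ} (hx : cornerNorm n x ≤ 1) (t : Fin (n + 2)) :
    |cornerFunctional n t x| ≤ 1 := by
  rw [cornerNorm_le_one_iff] at hx
  refine (pow_le_one_iff_of_nonneg (abs_nonneg _) (by omega : 2 * ((n + 3) / 2) ≠ 0)).mp ?_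
  exact (single_le_sum (fun s _ => by positivity) (mem_univ t)).trans hx

lemma cornerNorm_le_one {x : Fin n → ℝ} (hx : ∀ t, |cornerFunctional n t x| ≤ 1 / 2) :
    cornerNorm n x ≤ 1 := by
  rw [cornerNorm_le_one_iff]
  set m := 2 * ((n + 3) / 2)
  have hcard : ((n + 2 : ℕ) : ℝ) ≤ 2 ^ m := by
    exact_mod_cast (Nat.lt_two_pow_self).le.trans (Nat.pow_le_pow_right two_pos (by omega))
  calc ∑ t, |cornerFunctional n t x| ^ m ≤ ∑ _t : Fin (n + 2), (1 / 2 : ℝ) ^ m :=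
        sum_le_sum fun t _ => pow_le_pow_left₀ (abs_nonneg _) (hx t) m
    _ = (n + 2 : ℕ) / 2 ^ m := by simp [div_eq_mul_inv]
    _ ≤ 1 := div_le_one_of_le₀ hcard (by positivity)

lemma sum_natCast_add_one_mul_single (r : Fin n) (c : ℝ) :
    ∑ s : Fin n, ((s : ℕ) + 1 : ℝ) * (Pi.single r c : Fin n → ℝ) s = ((r : ℕ) + 1) * c := by
  simp [Pi.single_apply, mul_ite]

lemma exists_val_ne (hn : 4 ≤ n) (a b c : ℕ) :
    ∃ r : Fin n, (r : ℕ) ≠ a ∧ (r : ℕ) ≠ b ∧ (r : ℕ) ≠ c := by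
  by_contra! h
  have := h ⟨0, by omega⟩; have := h ⟨1, by omega⟩; have := h ⟨2, by omega⟩
  have := h ⟨3, by omega⟩
  simp only at *
  omega

lemma exists_val_ne_of_lt_imp_eq (hn : 4 ≤ n) {a b c i : ℕ} (ha : i ≠ a) (hb : i ≠ b)
    (hc : i ≠ c) :
    ∃ r : Fin n, ((r : ℕ) ≠ a ∧ (r : ℕ) ≠ b ∧ (r : ℕ) ≠ c) ∧ (i < n → (r : ℕ) = i) := by
  by_cases hi : i < n
  · exact ⟨⟨i, hi⟩, ⟨ha, hb, hc⟩, fun _ => rfl⟩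
  · obtain ⟨r, hr⟩ := exists_val_ne hn a b c
    exact ⟨r, hr, fun h => absurd h hi⟩

def IsCornerWitness (n : ℕ) (j k l i : Fin (n + 2)) (v : Fin n → ℝ) : Prop :=
  cornerFunctional n j v = 0 ∧ cornerFunctional n k v = 0 ∧ cornerFunctional n l v = 0 ∧
    (∀ t, |cornerFunctional n t v| ≤ n) ∧ 1 ≤ |cornerFunctional n i v|

section Witness

variable {j k l i : Fin (n + 2)}

lemma exists_isCornerWitness_of_lt (hn : 4 ≤ n) (hjk : (j : ℕ) < k) (hkl : (k : ℕ) < l)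
    (hl : (l : ℕ) < n) (hij : (i : ℕ) ≠ j) (hik : (i : ℕ) ≠ k) (hil : (i : ℕ) ≠ l) :
    ∃ v, IsCornerWitness n j k l i v := by
  obtain ⟨r, ⟨hrj, hrk, hrl⟩, hri⟩ := exists_val_ne_of_lt_imp_eq hn hij hik hil
  have hn1 : (1 : ℝ) ≤ n := by exact_mod_cast (by omega : 1 ≤ n)
  have hr : ((r : ℕ) + 1 : ℝ) ≤ n := by exact_mod_cast r.isLt
  have hzero (t : Fin (n + 2)) (ht : (t : ℕ) < n) (htr : (r : ℕ) ≠ t) :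
      cornerFunctional n t (Pi.single r (n : ℝ)) = 0 := by
    rw [cornerFunctional_of_lt ht]
    simp [Fin.ext_iff, htr.symm]
  refine ⟨Pi.single r (n : ℝ), hzero j (by omega) hrj, hzero k (by omega) hrk, hzero l hl hrl,
    abs_cornerFunctional_le (by omega) (fun s => ?_) (by simp) ?_, ?_⟩
  · rw [Pi.single_apply]; split_ifs <;> simp
  · rw [sum_natCast_add_one_mul_single, abs_of_nonneg (by positivity)]
    exact mul_le_mul_of_nonneg_right hr (by positivity)
  · obtain hi | hi | hi : (i : ℕ) < n ∨ (i : ℕ) = n ∨ (i : ℕ) = n + 1 := by omega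
    · rw [cornerFunctional_of_lt hi, show (⟨i, hi⟩ : Fin n) = r from Fin.ext (hri hi).symm]
      simpa using hn1
    · simpa [cornerFunctional_of_eq hi] using hn1
    · rw [cornerFunctional_of_eq_add_one hi, sum_natCast_add_one_mul_single,
        mul_div_cancel_right₀ _ (by positivity), abs_of_nonneg (by positivity)]
      linarith [(r : ℕ).cast_nonneg (α := ℝ)]

lemma exists_isCornerWitness_of_eq (hn : 4 ≤ n) (hjk : (j : ℕ) < k) (hkl : (k : ℕ) < l)
    (hl : (l : ℕ) = n) (hij : (i : ℕ) ≠ j) (hik : (i : ℕ) ≠ k) (hil : (i : ℕ) ≠ l) :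
    ∃ v, IsCornerWitness n j k l i v := by
  obtain ⟨r, ⟨hrj, hrk, -⟩, hri⟩ := exists_val_ne_of_lt_imp_eq hn hij hik hik
  obtain ⟨s, hsj, hsk, hsr⟩ := exists_val_ne hn j k r
  have hrs : r ≠ s := (Fin.ne_of_val_ne hsr).symm
  have hn1 : (1 : ℝ) ≤ n := by exact_mod_cast (by omega : 1 ≤ n)
  have hn0 : (0 : ℝ) < n := by linarith
  set v : Fin n → ℝ := Pi.single r (n : ℝ) + Pi.single s (-(n : ℝ))
  have hwsum : ∑ t : Fin n, ((t : ℕ) + 1 : ℝ) * v t = ((r : ℕ) - (s : ℕ)) * n := by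
    simp only [v, Pi.add_apply, mul_add, sum_add_distrib, sum_natCast_add_one_mul_single]
    ring
  have hsum : ∑ t, v t = 0 := by
    simp only [v, Pi.add_apply, sum_add_distrib, Fintype.sum_pi_single']
    ring
  have hzero (t : Fin (n + 2)) (ht : (t : ℕ) < n) (htr : (r : ℕ) ≠ t) (hts : (s : ℕ) ≠ t) :
      cornerFunctional n t v = 0 := by
    rw [cornerFunctional_of_lt ht]
    simp [v, Fin.ext_iff, htr.symm, hts.symm]
  refine ⟨v, hzero j (by omega) hrj hsj, hzero k (by omega) hrk hsk,
    by rw [cornerFunctional_of_eq hl, hsum], abs_cornerFunctional_le (by omega)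
      (abs_single_add_single_le hrs (by simp) (by simp)) (by simp [hsum]) ?_, ?_⟩
  · rw [hwsum, abs_mul, Nat.abs_cast]
    exact mul_le_mul_of_nonneg_right (abs_natCast_sub_natCast_le r.isLt.le s.isLt.le) hn0.le
  · obtain hi | hi : (i : ℕ) < n ∨ (i : ℕ) = n + 1 := by omega
    · rw [cornerFunctional_of_lt hi, show (⟨i, hi⟩ : Fin n) = r from Fin.ext (hri hi).symm]
      simpa [v, hrs] using hn1
    · rw [cornerFunctional_of_eq_add_one hi, hwsum, mul_div_cancel_right₀ _ hn0.ne']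
      exact one_le_abs_natCast_sub_natCast hsr.symm

lemma exists_isCornerWitness_of_eq_add_one_of_lt (hn : 4 ≤ n) (hjk : (j : ℕ) < k)
    (hk : (k : ℕ) < n) (hl : (l : ℕ) = n + 1) (hij : (i : ℕ) ≠ j) (hik : (i : ℕ) ≠ k)
    (hil : (i : ℕ) ≠ l) : ∃ v, IsCornerWitness n j k l i v := by
  obtain ⟨r, ⟨hrj, hrk, -⟩, hri⟩ := exists_val_ne_of_lt_imp_eq hn hij hik hik
  obtain ⟨s, hsj, hsk, hsr⟩ := exists_val_ne hn j k r
  have hrs : r ≠ s := (Fin.ne_of_val_ne hsr).symm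
  have hr : ((r : ℕ) + 1 : ℝ) ≤ n := by exact_mod_cast r.isLt
  have hs : ((s : ℕ) + 1 : ℝ) ≤ n := by exact_mod_cast s.isLt
  set v : Fin n → ℝ := Pi.single r ((s : ℕ) + 1 : ℝ) + Pi.single s (-((r : ℕ) + 1 : ℝ))
  have hsum : ∑ t, v t = (s : ℕ) - (r : ℕ) := by
    simp only [v, Pi.add_apply, sum_add_distrib, Fintype.sum_pi_single']
    ring
  have hwsum : ∑ t : Fin n, ((t : ℕ) + 1 : ℝ) * v t = 0 := by
    simp only [v, Pi.add_apply, mul_add, sum_add_distrib, sum_natCast_add_one_mul_single]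
    ring
  have hzero (t : Fin (n + 2)) (ht : (t : ℕ) < n) (htr : (r : ℕ) ≠ t) (hts : (s : ℕ) ≠ t) :
      cornerFunctional n t v = 0 := by
    rw [cornerFunctional_of_lt ht]
    simp [v, Fin.ext_iff, htr.symm, hts.symm]
  refine ⟨v, hzero j (by omega) hrj hsj, hzero k hk hrk hsk,
    by rw [cornerFunctional_of_eq_add_one hl, hwsum, zero_div], abs_cornerFunctional_le
    (by omega) (abs_single_add_single_le hrs ?_ ?_) ?_ (by rw [hwsum, abs_zero]; positivity), ?_⟩
  · rwa [abs_of_nonneg (by positivity)]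
  · rwa [abs_neg, abs_of_nonneg (by positivity)]
  · rw [hsum]; exact abs_natCast_sub_natCast_le s.isLt.le r.isLt.le
  · obtain hi | hi : (i : ℕ) < n ∨ (i : ℕ) = n := by omega
    · rw [cornerFunctional_of_lt hi, show (⟨i, hi⟩ : Fin n) = r from Fin.ext (hri hi).symm]
      simp only [v, Pi.add_apply, Pi.single_eq_same, Pi.single_eq_of_ne hrs, add_zero]
      exact (le_add_of_nonneg_left (by positivity)).trans (le_abs_self _)
    · rw [cornerFunctional_of_eq hi, hsum]
      exact one_le_abs_natCast_sub_natCast hsr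

lemma exists_isCornerWitness_of_eq_of_eq_add_one (hn : 4 ≤ n) (hj : (j : ℕ) < n)
    (hk : (k : ℕ) = n) (hl : (l : ℕ) = n + 1) (hij : (i : ℕ) ≠ j) (hik : (i : ℕ) ≠ k)
    (hil : (i : ℕ) ≠ l) : ∃ v, IsCornerWitness n j k l i v := by
  have hi : (i : ℕ) < n := by omega
  set r : Fin n := ⟨i, hi⟩
  obtain ⟨s, hsr, hsj, -⟩ := exists_val_ne hn i j j
  obtain ⟨u, hur, huj, hus⟩ := exists_val_ne hn i j s
  have hrs : r ≠ s := (Fin.ne_of_val_ne hsr).symm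
  have hru : r ≠ u := (Fin.ne_of_val_ne hur).symm
  have hsu : s ≠ u := (Fin.ne_of_val_ne hus).symm
  have hdiff (a b : Fin n) : |((a : ℕ) : ℝ) - (b : ℕ)| ≤ n :=
    abs_natCast_sub_natCast_le a.isLt.le b.isLt.le
  set v : Fin n → ℝ := Pi.single r (((u : ℕ) : ℝ) - (s : ℕ)) +
    Pi.single s (((r : ℕ) : ℝ) - (u : ℕ)) + Pi.single u (((s : ℕ) : ℝ) - (r : ℕ))
  have hsum : ∑ t, v t = 0 := by
    simp only [v, Pi.add_apply, sum_add_distrib, Fintype.sum_pi_single']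
    ring
  have hwsum : ∑ t : Fin n, ((t : ℕ) + 1 : ℝ) * v t = 0 := by
    simp only [v, Pi.add_apply, mul_add, sum_add_distrib, sum_natCast_add_one_mul_single]
    ring
  refine ⟨v, ?_, by rw [cornerFunctional_of_eq hk, hsum],
    by rw [cornerFunctional_of_eq_add_one hl, hwsum, zero_div], abs_cornerFunctional_le
    (by omega) (abs_single_add_single_add_single_le hrs hru hsu (hdiff _ _) (hdiff _ _)
      (hdiff _ _)) (by simp [hsum]) (by rw [hwsum, abs_zero]; positivity), ?_⟩
  · rw [cornerFunctional_of_lt hj]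
    simp [v, Fin.ext_iff, r, hij, hsj.symm, huj.symm]
  · rw [cornerFunctional_of_lt hi]
    change 1 ≤ |v r|
    simpa [v, hrs, hru] using one_le_abs_natCast_sub_natCast hus

lemma exists_isCornerWitness (hn : 4 ≤ n) (hjk : j < k) (hkl : k < l) (hij : i ≠ j)
    (hik : i ≠ k) (hil : i ≠ l) : ∃ v, IsCornerWitness n j k l i v := by
  rw [Fin.lt_def] at hjk hkl
  replace hij := Fin.val_ne_of_ne hij
  replace hik := Fin.val_ne_of_ne hik
  replace hil := Fin.val_ne_of_ne hil
  obtain hl | hl | hl : (l : ℕ) < n ∨ (l : ℕ) = n ∨ (l : ℕ) = n + 1 := by omega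
  · exact exists_isCornerWitness_of_lt hn hjk hkl hl hij hik hil
  · exact exists_isCornerWitness_of_eq hn hjk hkl hl hij hik hil
  obtain hk | hk : (k : ℕ) < n ∨ (k : ℕ) = n := by omega
  · exact exists_isCornerWitness_of_eq_add_one_of_lt hn hjk hk hl hij hik hil
  · exact exists_isCornerWitness_of_eq_of_eq_add_one hn (by omega) hk hl hij hik hil

lemma IsCornerWitness.exists_cornerNorm_le_one {v : Fin n → ℝ}
    (hv : IsCornerWitness n j k l i v) (hn : 0 < n) :
    ∃ x, cornerFunctional n j x = 0 ∧ cornerFunctional n k x = 0 ∧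
      cornerFunctional n l x = 0 ∧ cornerNorm n x ≤ 1 ∧
      1 / (2 * (n : ℝ)) ≤ |cornerFunctional n i x| := by
  obtain ⟨hj, hk, hl, hbound, hi⟩ := hv
  have hc : (0 : ℝ) < 1 / (2 * n) := by positivity
  refine ⟨(1 / (2 * n) : ℝ) • v, by rw [cornerFunctional_smul, hj, mul_zero],
    by rw [cornerFunctional_smul, hk, mul_zero], by rw [cornerFunctional_smul, hl, mul_zero],
    cornerNorm_le_one fun t => ?_, ?_⟩ <;> rw [cornerFunctional_smul, abs_mul, abs_of_pos hc]
  · calc 1 / (2 * n) * |cornerFunctional n t v| ≤ 1 / (2 * n) * n := by gcongr; exact hbound t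
      _ = 1 / 2 := by field_simp
  · exact le_mul_of_one_le_right hc.le hi

end Witness

lemma bddAbove_abs_cornerFunctional_sub (i j k l : Fin (n + 2)) (a b c : ℝ) :
    BddAbove {t : ℝ | ∃ x : Fin n → ℝ, cornerNorm n x ≤ 1 ∧
      t = |cornerFunctional n i x - (a * cornerFunctional n j x + b * cornerFunctional n k x +
        c * cornerFunctional n l x)|} := by
  refine ⟨1 + (|a| + |b| + |c|), ?_⟩
  rintro _ ⟨x, hx, rfl⟩
  have h := abs_cornerFunctional_le_one hx
  calc _ ≤ |cornerFunctional n i x| + (|a| * |cornerFunctional n j x| +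
        |b| * |cornerFunctional n k x| + |c| * |cornerFunctional n l x|) := by
        rw [← abs_mul, ← abs_mul, ← abs_mul]
        exact (abs_sub _ _).trans (add_le_add_right (abs_add_three _ _ _) _)
    _ ≤ 1 + (|a| * 1 + |b| * 1 + |c| * 1) := by gcongr <;> apply h
    _ = 1 + (|a| + |b| + |c|) := by ring

end

/-- The dual-norm distance from `fᵢ` to the span of any three other functionals of the
system is at least `1/(2n)`: for all coefficients `a, b, c`, the dual norm of
`fᵢ - (a f_j + b f_k + c f_l)` is at least `1/(2n)`. -/
theorem cornerFunctional_dual_distance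
    (n : ℕ) (hn : 4 ≤ n) (j k l i : Fin (n + 2))
    (hjk : j < k) (hkl : k < l) (hij : i ≠ j) (hik : i ≠ k) (hil : i ≠ l) :
    ∀ a b c : ℝ,
      1 / (2 * (n : ℝ)) ≤
        sSup {t : ℝ | ∃ x : Fin n → ℝ, cornerNorm n x ≤ 1 ∧
          t = |cornerFunctional n i x -
              (a * cornerFunctional n j x + b * cornerFunctional n k x +
                c * cornerFunctional n l x)|} := by
  intro a b c
  obtain ⟨v, hv⟩ := exists_isCornerWitness hn hjk hkl hij hik hil
  obtain ⟨x, hxj, hxk, hxl, hx, hxi⟩ := hv.exists_cornerNorm_le_one (by omega)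
  refine le_csSup_of_le (bddAbove_abs_cornerFunctional_sub i j k l a b c) ⟨x, hx, rfl⟩ ?_
  simpa [hxj, hxk, hxl] using hxi
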